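/- (Riemann–Lebesgue lemma) Let f : ℝ → ℝ be Lebesgue integrable on every compact interval, of bounded variation on all of ℝ, and such that the improper integral ∫_{-∞}^∞ f exists. Then the Fourier transform f̂(y) = ∫_{-∞}^∞ f(x)e^{−2πixy} dx exists as an improper integral for every y ∈ ℝ, and f̂(t) → 0 as |t| → ∞. -/

import Mathlib

open MeasureTheory Filter Topology intervalIntegral

/-- The improper integral `∫_{-∞}^∞ h = L` (real-valued). -/
def HasImpInt (h : ℝ → ℝ) (L : ℝ) : Prop :=
  ∃ L₁ L₂ : ℝ,
    Tendsto (fun c => ∫ x in c..(0:ℝ), h x) atBot (𝓝 L₁) ∧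
    Tendsto (fun c => ∫ x in (0:ℝ)..c, h x) atTop (𝓝 L₂) ∧ L = L₁ + L₂

/-- The improper integral `∫_{-∞}^∞ h = z` (complex-valued). -/
def HasImpIntC (h : ℝ → ℂ) (z : ℂ) : Prop :=
  ∃ z₁ z₂ : ℂ,
    Tendsto (fun c => ∫ x in c..(0:ℝ), h x) atBot (𝓝 z₁) ∧
    Tendsto (fun c => ∫ x in (0:ℝ)..c, h x) atTop (𝓝 z₂) ∧ z = z₁ + z₂

/-- The Fourier kernel `e^{-2πixy}`. -/
noncomputable def fourierKernel (x y : ℝ) : ℂ :=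
  Complex.exp (-(2 * Real.pi * Complex.I * x * y))

/-! A function of bounded variation whose improper integral exists must tend to `0` at `±∞`.
Its Stieltjes signed measure then has total mass `0`, and its Jordan decomposition writes
`f = F_μ - F_ν` almost everywhere, with `F_μ x = μ (-∞, x]` for finite measures `μ`, `ν` of equal
mass. By Fubini, `∫_b^c F_μ(x) e^{-2πixy} dx` is the `μ`-integral of an explicit primitive of the
kernel, which gives `f̂(y) = (ν̂(y) - μ̂(y)) / (-2πiy)` for `y ≠ 0`. Since `‖μ̂‖ ≤ μ ℝ` and
`‖ν̂‖ ≤ ν ℝ`, this is `O(1/|y|)`. -/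

open Set Complex

theorem eq_zero_of_tendsto_of_tendsto_intervalIntegral_atTop {E : Type*} [NormedAddCommGroup E]
    [NormedSpace ℝ E] [CompleteSpace E] {f : ℝ → E}
    (hf : ∀ c d : ℝ, IntervalIntegrable f volume c d) {I l : E}
    (hI : Tendsto (fun c => ∫ x in (0 : ℝ)..c, f x) atTop (𝓝 I)) (hl : Tendsto f atTop (𝓝 l)) :
    l = 0 := by
  have h_zero : Tendsto (fun c => ∫ x in c..c + 1, f x) atTop (𝓝 0) := by
    simpa using ((hI.comp (tendsto_atTop_add_const_right _ 1 tendsto_id)).sub hI).congr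
      fun c => integral_interval_sub_left (hf 0 _) (hf 0 _)
  have h_lim : Tendsto (fun c => ∫ x in c..c + 1, f x) atTop (𝓝 l) := by
    refine Metric.tendsto_nhds.2 fun ε hε => ?_
    obtain ⟨N, hN⟩ := eventually_atTop.1 (Metric.tendsto_nhds.1 hl (ε / 2) (half_pos hε))
    filter_upwards [eventually_ge_atTop N] with c hc
    have hbound : ‖∫ x in c..c + 1, (f x - l)‖ ≤ ε / 2 * |c + 1 - c| :=
      norm_integral_le_of_norm_le_const fun x hx => by
        rw [uIoc_of_le (by linarith)] at hx
        exact (dist_eq_norm (f x) l ▸ hN x (hc.trans hx.1.le)).le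
    rw [integral_sub (hf _ _) intervalIntegrable_const, add_sub_cancel_left, abs_one, mul_one,
      intervalIntegral.integral_const, add_sub_cancel_left, one_smul] at hbound
    rw [dist_eq_norm]
    linarith
  exact tendsto_nhds_unique h_lim h_zero

theorem eq_zero_of_tendsto_of_tendsto_intervalIntegral_atBot {E : Type*} [NormedAddCommGroup E]
    [NormedSpace ℝ E] [CompleteSpace E] {f : ℝ → E}
    (hf : ∀ c d : ℝ, IntervalIntegrable f volume c d) {I l : E}
    (hI : Tendsto (fun c => ∫ x in c..(0 : ℝ), f x) atBot (𝓝 I)) (hl : Tendsto f atBot (𝓝 l)) :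
    l = 0 := by
  have hf_neg (c d : ℝ) : IntervalIntegrable (fun x => f (-x)) volume c d := by
    simpa using (IntervalIntegrable.iff_comp_neg (by simp)).1 (hf (-c) (-d))
  refine eq_zero_of_tendsto_of_tendsto_intervalIntegral_atTop hf_neg (I := I) ?_
    (hl.comp tendsto_neg_atTop_atBot)
  simp_rw [integral_comp_neg, neg_zero]
  exact hI.comp tendsto_neg_atTop_atBot

theorem HasImpInt.ofReal {h : ℝ → ℝ} {L : ℝ} (hL : HasImpInt h L) :
    HasImpIntC (fun x => (h x : ℂ)) L := by
  obtain ⟨L₁, L₂, h₁, h₂, rfl⟩ := hL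
  refine ⟨L₁, L₂, ?_, ?_, by push_cast; rfl⟩ <;>
    simp_rw [intervalIntegral.integral_ofReal] <;>
    exact (continuous_ofReal.tendsto _).comp ‹_›

theorem LocallyBoundedVariationOn.ae_eq_rightLim {V : Type*} [NormedAddCommGroup V]
    [NormedSpace ℝ V] [FiniteDimensional ℝ V] {f : ℝ → V}
    (hf : LocallyBoundedVariationOn f univ) : f =ᵐ[volume] Function.rightLim f := by
  filter_upwards [hf.ae_differentiableAt] with x hx
  exact (rightLim_eq_of_tendsto (hx.continuousAt.tendsto.mono_left nhdsWithin_le_nhds)).symm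

theorem BoundedVariationOn.exists_ae_eq_measureReal_Iic_sub {f : ℝ → ℝ}
    (hf : BoundedVariationOn f univ) (h_top : Tendsto f atTop (𝓝 0))
    (h_bot : Tendsto f atBot (𝓝 0)) :
    ∃ (μ ν : Measure ℝ) (_ : IsFiniteMeasure μ) (_ : IsFiniteMeasure ν),
      μ.real univ = ν.real univ ∧ ∀ᵐ x, f x = μ.real (Iic x) - ν.real (Iic x) := by
  set s := SignedMeasure.toJordanDecomposition hf.vectorMeasure
  refine ⟨s.posPart, s.negPart, inferInstance, inferInstance, ?_, ?_⟩
  · rw [← sub_eq_zero, ← SignedMeasure.apply_eq_posPart_real_sub_negPart_real _ .univ,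
      hf.vectorMeasure_univ, h_top.limUnder_eq, h_bot.limUnder_eq, sub_zero]
  · filter_upwards [hf.locallyBoundedVariationOn.ae_eq_rightLim] with x hx
    rw [hx, ← SignedMeasure.apply_eq_posPart_real_sub_negPart_real _ measurableSet_Iic,
      hf.vectorMeasure_Iic, h_bot.limUnder_eq, sub_zero]

noncomputable def fourierExponent (y : ℝ) : ℂ := -(2 * Real.pi * I * y)

theorem fourierKernel_eq_exp (x y : ℝ) : fourierKernel x y = exp (fourierExponent y * x) := by
  rw [fourierKernel, fourierExponent]
  ring_nf

theorem norm_fourierExponent (y : ℝ) : ‖fourierExponent y‖ = 2 * Real.pi * |y| := by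
  simp [fourierExponent, abs_of_pos Real.pi_pos]

theorem fourierExponent_ne_zero {y : ℝ} (hy : y ≠ 0) : fourierExponent y ≠ 0 := by
  simp [fourierExponent, Real.pi_ne_zero, hy]

theorem norm_fourierKernel (x y : ℝ) : ‖fourierKernel x y‖ = 1 := by
  rw [fourierKernel, norm_exp]
  simp

theorem continuous_fourierKernel (y : ℝ) : Continuous fun x => fourierKernel x y := by
  unfold fourierKernel
  fun_prop

theorem fourierKernel_zero_left (y : ℝ) : fourierKernel 0 y = 1 := by
  simp [fourierKernel]

theorem integral_fourierKernel {y : ℝ} (hy : y ≠ 0) (a b : ℝ) :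
    ∫ x in a..b, fourierKernel x y
      = (fourierKernel b y - fourierKernel a y) / fourierExponent y := by
  simp_rw [fourierKernel_eq_exp]
  exact integral_exp_mul_complex (fourierExponent_ne_zero hy)

theorem setIntegral_Ioc_measureReal_Iic_smul {E : Type*} [NormedAddCommGroup E]
    [NormedSpace ℝ E] [CompleteSpace E] (μ : Measure ℝ) [IsFiniteMeasure μ] {k : ℝ → E}
    {b c : ℝ} (hk : IntegrableOn k (Ioc b c)) :
    ∫ x in Ioc b c, μ.real (Iic x) • k x = ∫ t, (∫ x in Ioc (max b t) c, k x) ∂μ := by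
  have h_cdf : ∀ x, μ.real (Iic x) • k x = ∫ t, (Iic x).indicator (fun _ => k x) t ∂μ :=
    fun x => (integral_indicator_const _ measurableSet_Iic).symm
  have h_int : Integrable
      (Function.uncurry fun x t => (Iic x).indicator (fun _ => k x) t)
      ((volume.restrict (Ioc b c)).prod μ) :=
    (hk.comp_fst μ).indicator (measurableSet_le measurable_snd measurable_fst)
  have h_inner : ∀ t, ∫ x in Ioc b c, (Iic x).indicator (fun _ => k x) t
      = ∫ x in Ioc (max b t) c, k x := by
    intro t
    have h_indicator : (fun x => (Iic x).indicator (fun _ => k x) t) = (Ici t).indicator k := by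
      ext x
      simp [indicator_apply]
    rw [h_indicator, setIntegral_indicator measurableSet_Ici, ← Ioc_inter_Ioi]
    exact setIntegral_congr_set (ae_eq_refl _ |>.inter Ioi_ae_eq_Ici.symm)
  simp_rw [h_cdf, integral_integral_swap h_int, h_inner]

theorem integrable_fourierKernel_comp (μ : Measure ℝ) [IsFiniteMeasure μ] {u : ℝ → ℝ}
    (hu : Measurable u) (y : ℝ) : Integrable (fun t => fourierKernel (u t) y) μ :=
  .of_bound ((continuous_fourierKernel y).measurable.comp hu).aestronglyMeasurable 1
    (ae_of_all _ fun _ => (norm_fourierKernel _ _).le)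

theorem intervalIntegral_measureReal_Iic_mul_fourierKernel (μ : Measure ℝ) [IsFiniteMeasure μ]
    {y : ℝ} (hy : y ≠ 0) {b c : ℝ} (hbc : b ≤ c) :
    ∫ x in b..c, (μ.real (Iic x) : ℂ) * fourierKernel x y
      = (μ.real univ * fourierKernel c y - ∫ t, fourierKernel (min (max b t) c) y ∂μ)
          / fourierExponent y := by
  have h_inner : ∀ t, ∫ x in Ioc (max b t) c, fourierKernel x y
      = (fourierKernel c y - fourierKernel (min (max b t) c) y) / fourierExponent y := by
    intro t
    rw [← integral_fourierKernel hy, integral_of_le (min_le_right _ _)]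
    congr 2
    ext x
    simp only [mem_Ioc, min_lt_iff]
    grind
  simp_rw [integral_of_le hbc, ← Complex.real_smul,
    setIntegral_Ioc_measureReal_Iic_smul μ (continuous_fourierKernel y).integrableOn_Ioc,
    h_inner, MeasureTheory.integral_div]
  rw [integral_sub (integrable_const _)
      (integrable_fourierKernel_comp μ (by fun_prop : Measurable fun t => min (max b t) c) y),
    MeasureTheory.integral_const, Complex.real_smul]

theorem intervalIntegrable_measureReal_Iic_mul_fourierKernel (μ : Measure ℝ) [IsFiniteMeasure μ]
    (y b c : ℝ) :
    IntervalIntegrable (fun x => (μ.real (Iic x) : ℂ) * fourierKernel x y) volume b c := by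
  have h_mono : Monotone fun x => μ.real (Iic x) :=
    fun _ _ h => measureReal_mono (Iic_subset_Iic.2 h)
  have h_cdf := h_mono.intervalIntegrable (μ := volume) (a := b) (b := c)
  exact IntervalIntegrable.mul_continuousOn ⟨h_cdf.1.ofReal, h_cdf.2.ofReal⟩
    (continuous_fourierKernel y).continuousOn

theorem intervalIntegral_mul_fourierKernel_of_ae_eq {g : ℝ → ℝ} (μ ν : Measure ℝ)
    [IsFiniteMeasure μ] [IsFiniteMeasure ν] (hmass : μ.real univ = ν.real univ)
    (hg : ∀ᵐ x, g x = μ.real (Iic x) - ν.real (Iic x)) {y : ℝ} (hy : y ≠ 0) {b c : ℝ}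
    (hbc : b ≤ c) :
    ∫ x in b..c, (g x : ℂ) * fourierKernel x y
      = (∫ t, fourierKernel (min (max b t) c) y ∂ν - ∫ t, fourierKernel (min (max b t) c) y ∂μ)
          / fourierExponent y := by
  have h_split : ∫ x in b..c, (g x : ℂ) * fourierKernel x y
      = ∫ x in b..c, ((μ.real (Iic x) : ℂ) * fourierKernel x y
          - (ν.real (Iic x) : ℂ) * fourierKernel x y) := by
    refine integral_congr_ae ?_
    filter_upwards [hg] with x hx _
    rw [hx]
    push_cast
    ring
  rw [h_split, integral_sub (intervalIntegrable_measureReal_Iic_mul_fourierKernel μ y b c)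
      (intervalIntegrable_measureReal_Iic_mul_fourierKernel ν y b c),
    intervalIntegral_measureReal_Iic_mul_fourierKernel μ hy hbc,
    intervalIntegral_measureReal_Iic_mul_fourierKernel ν hy hbc, hmass, div_sub_div_same]
  ring

theorem tendsto_integral_fourierKernel_comp {ι : Type*} {l : Filter ι} [l.IsCountablyGenerated]
    (μ : Measure ℝ) [IsFiniteMeasure μ] (y : ℝ) {u : ι → ℝ → ℝ} {v : ℝ → ℝ}
    (hu : ∀ i, Measurable (u i)) (huv : ∀ t, Tendsto (fun i => u i t) l (𝓝 (v t))) :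
    Tendsto (fun i => ∫ t, fourierKernel (u i t) y ∂μ) l
      (𝓝 (∫ t, fourierKernel (v t) y ∂μ)) :=
  tendsto_integral_filter_of_dominated_convergence (fun _ => 1)
    (.of_forall fun i => (integrable_fourierKernel_comp μ (hu i) y).aestronglyMeasurable)
    (.of_forall fun _ => ae_of_all _ fun _ => (norm_fourierKernel _ _).le)
    (integrable_const 1)
    (ae_of_all _ fun t => ((continuous_fourierKernel y).tendsto _).comp (huv t))

theorem integral_fourierKernel_min_add_integral_fourierKernel_max (μ : Measure ℝ)
    [IsFiniteMeasure μ] (y : ℝ) :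
    ∫ t, fourierKernel (min t 0) y ∂μ + ∫ t, fourierKernel (max 0 t) y ∂μ
      = ∫ t, fourierKernel t y ∂μ + μ.real univ := by
  have h_pointwise : ∀ t : ℝ, fourierKernel (min t 0) y + fourierKernel (max 0 t) y
      = fourierKernel t y + 1 := by
    intro t
    rcases le_total t 0 with ht | ht
    · rw [min_eq_left ht, max_eq_left ht, fourierKernel_zero_left]
    · rw [min_eq_right ht, max_eq_right ht, fourierKernel_zero_left, add_comm]
  rw [← integral_add (integrable_fourierKernel_comp μ (by fun_prop) y)
      (integrable_fourierKernel_comp μ (by fun_prop) y)]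
  simp_rw [h_pointwise]
  rw [integral_add (integrable_fourierKernel_comp μ measurable_id' y) (integrable_const _),
    MeasureTheory.integral_const, Complex.real_smul, mul_one]

theorem hasImpIntC_mul_fourierKernel_of_ae_eq {g : ℝ → ℝ} (μ ν : Measure ℝ)
    [IsFiniteMeasure μ] [IsFiniteMeasure ν] (hmass : μ.real univ = ν.real univ)
    (hg : ∀ᵐ x, g x = μ.real (Iic x) - ν.real (Iic x)) {y : ℝ} (hy : y ≠ 0) :
    HasImpIntC (fun x => (g x : ℂ) * fourierKernel x y)
      ((∫ t, fourierKernel t y ∂ν - ∫ t, fourierKernel t y ∂μ) / fourierExponent y) := by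
  refine ⟨(∫ t, fourierKernel (min t 0) y ∂ν - ∫ t, fourierKernel (min t 0) y ∂μ)
      / fourierExponent y,
    (∫ t, fourierKernel (max 0 t) y ∂ν - ∫ t, fourierKernel (max 0 t) y ∂μ)
      / fourierExponent y, ?_, ?_, ?_⟩
  · have h_clamp : ∀ t : ℝ, Tendsto (fun b => min (max b t) 0) atBot (𝓝 (min t 0)) :=
      fun t => tendsto_const_nhds.congr' <| by
        filter_upwards [eventually_le_atBot t] with b hb
        rw [max_eq_right hb]
    refine (((tendsto_integral_fourierKernel_comp ν y (by fun_prop) h_clamp).sub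
      (tendsto_integral_fourierKernel_comp μ y (by fun_prop) h_clamp)).div_const _).congr' ?_
    filter_upwards [eventually_le_atBot 0] with b hb
    exact (intervalIntegral_mul_fourierKernel_of_ae_eq μ ν hmass hg hy hb).symm
  · have h_clamp : ∀ t : ℝ, Tendsto (fun c => min (max 0 t) c) atTop (𝓝 (max 0 t)) :=
      fun t => tendsto_const_nhds.congr' <| by
        filter_upwards [eventually_ge_atTop (max 0 t)] with c hc
        rw [min_eq_left hc]
    refine (((tendsto_integral_fourierKernel_comp ν y (by fun_prop) h_clamp).sub
      (tendsto_integral_fourierKernel_comp μ y (by fun_prop) h_clamp)).div_const _).congr' ?_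
    filter_upwards [eventually_ge_atTop 0] with c hc
    exact (intervalIntegral_mul_fourierKernel_of_ae_eq μ ν hmass hg hy hc).symm
  · have hμ := integral_fourierKernel_min_add_integral_fourierKernel_max μ y
    have hν := integral_fourierKernel_min_add_integral_fourierKernel_max ν y
    rw [← add_div]
    congr 1
    linear_combination hμ - hν + congrArg ((↑) : ℝ → ℂ) hmass

theorem tendsto_integral_fourierKernel_div_cocompact (μ : Measure ℝ) [IsFiniteMeasure μ] :
    Tendsto (fun y => (∫ t, fourierKernel t y ∂μ) / fourierExponent y) (cocompact ℝ) (𝓝 0) := by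
  have h_bound : ∀ y, ‖(∫ t, fourierKernel t y ∂μ) / fourierExponent y‖
      ≤ μ.real univ / ‖fourierExponent y‖ := fun y => by
    rw [norm_div]
    gcongr
    simpa using norm_integral_le_of_norm_le_const (μ := μ)
      (ae_of_all _ fun t => (norm_fourierKernel t y).le)
  have h_exponent : Tendsto (fun y => ‖fourierExponent y‖) (cocompact ℝ) atTop := by
    simp_rw [norm_fourierExponent, ← Real.norm_eq_abs]
    exact tendsto_norm_cocompact_atTop.const_mul_atTop (by positivity)
  exact squeeze_zero_norm h_bound (tendsto_const_nhds.div_atTop h_exponent)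

/-- **Riemann–Lebesgue lemma.** If `f` is Lebesgue integrable on every compact interval,
of bounded variation on all of `ℝ`, and its improper integral over `ℝ` exists, then
`f̂(y)` exists as an improper integral for every `y` and `f̂(t) → 0` as `|t| → ∞`. -/
theorem riemann_lebesgue (f : ℝ → ℝ)
    (hfloc : ∀ c d : ℝ, IntervalIntegrable f volume c d)
    (hBV : BoundedVariationOn f Set.univ)
    (hfimp : ∃ L : ℝ, HasImpInt f L) :
    ∃ Ff : ℝ → ℂ,
      (∀ y : ℝ, HasImpIntC (fun x => (f x : ℂ) * fourierKernel x y) (Ff y)) ∧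
      Tendsto Ff (cocompact ℝ) (𝓝 0) := by
  obtain ⟨L, hL⟩ := hfimp
  obtain ⟨L₁, L₂, h_bot_int, h_top_int, -⟩ := id hL
  have h_top : Tendsto f atTop (𝓝 0) := by
    have h_lim := hBV.tendsto_atTop_limUnder
    rwa [eq_zero_of_tendsto_of_tendsto_intervalIntegral_atTop hfloc h_top_int h_lim] at h_lim
  have h_bot : Tendsto f atBot (𝓝 0) := by
    have h_lim := hBV.tendsto_atBot_limUnder
    rwa [eq_zero_of_tendsto_of_tendsto_intervalIntegral_atBot hfloc h_bot_int h_lim] at h_lim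
  obtain ⟨μ, ν, _, _, h_mass, h_ae⟩ := hBV.exists_ae_eq_measureReal_Iic_sub h_top h_bot
  refine ⟨fun y => if y = 0 then (L : ℂ) else
    (∫ t, fourierKernel t y ∂ν - ∫ t, fourierKernel t y ∂μ) / fourierExponent y, fun y => ?_, ?_⟩
  · by_cases hy : y = 0
    · simpa [hy, fourierKernel] using hL.ofReal
    · simpa [hy] using hasImpIntC_mul_fourierKernel_of_ae_eq μ ν h_mass h_ae hy
  · have h_decay := (tendsto_integral_fourierKernel_div_cocompact ν).sub
      (tendsto_integral_fourierKernel_div_cocompact μ)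
    rw [sub_zero] at h_decay
    refine h_decay.congr' ?_
    filter_upwards [(isCompact_singleton (x := (0 : ℝ))).compl_mem_cocompact] with y (hy : y ≠ 0)
    rw [if_neg hy, sub_div]
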